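/- arXiv:1809.10298 — 6 statements merged into one kernel-verified Lean document; each statement's English description precedes it below -/
import Mathlib

section
/- For every integer t ≥ 3, there exists a coloring of the edges of the complete graph on 2t − 2 vertices with two colors that contains no monochromatic copy of S_t^+. Consequently R(S_t^+, S_t^+) ≥ 2t − 1. -/
/-!
Split the `2t - 2` vertices into two halves of `t - 1` vertices and colour an edge `0` when its
ends lie in the same half, `1` otherwise. A copy of `S_t^+` in colour `0` lies in one half, since
its centre is joined to every other vertex, and the half is too small; colour `1` is bipartite,
so it contains no triangle.

Since `ramsey2` is an infimum (`0` for an empty set), the Ramsey bound also needs some `n` for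
which every colouring has a monochromatic `S_t^+`. Any `n ≥ 2t` works: some vertex has `t`
neighbours in one colour, and they either span an edge of that colour, completing an `S_t^+`
centred at the vertex, or form a clique of the other colour.
-/

open SimpleGraph

/-- `S_t^+`: the star on `t` vertices (center `0`, leaves `1, …, t-1`)
together with one extra edge between the leaves `1` and `2`, forming a triangle. -/
def starPlus (t : ℕ) : SimpleGraph (Fin t) :=
  SimpleGraph.fromRel (fun a b => a.val = 0 ∨ (a.val = 1 ∧ b.val = 2))

/-- `P_t^+`: the path on `t` vertices `0, 1, …, t-1` (in order) together with
the extra edge between `0` and `2`, forming a triangle at one end. -/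
def pathPlus (t : ℕ) : SimpleGraph (Fin t) :=
  SimpleGraph.fromRel (fun a b => b.val = a.val + 1 ∨ (a.val = 0 ∧ b.val = 2))

/-- An edge-coloring `c` of the complete graph on `V` contains a copy of `H`
in color `col`: an injective map of the vertices of `H` into `V` sending every
edge of `H` to a pair colored `col`. -/
def HasCopyIn {V C α : Type*} (c : Sym2 V → C) (col : C) (H : SimpleGraph α) : Prop :=
  ∃ f : α → V, Function.Injective f ∧ ∀ a b : α, H.Adj a b → c s(f a, f b) = col

/-- An edge-coloring `c` of the complete graph on `V` contains a monochromatic copy of `H`. -/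
def HasMonoCopy {V C α : Type*} (c : Sym2 V → C) (H : SimpleGraph α) : Prop :=
  ∃ col : C, HasCopyIn c col H

/-- An edge-coloring `c` of the complete graph on `V` contains a rainbow triangle:
three vertices whose three pairwise edges get pairwise distinct colors. -/
def HasRainbowTriangle {V C : Type*} (c : Sym2 V → C) : Prop :=
  ∃ u v w : V, u ≠ v ∧ u ≠ w ∧ v ≠ w ∧
    c s(u, v) ≠ c s(u, w) ∧ c s(u, v) ≠ c s(v, w) ∧ c s(u, w) ≠ c s(v, w)

/-- The `k`-color Gallai-Ramsey number `gr_k(K_3 : H)`: the least `n` such that every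
`k`-coloring of the edges of `K_n` contains a rainbow triangle or a monochromatic copy of `H`. -/
noncomputable def grK3 (k : ℕ) {α : Type*} (H : SimpleGraph α) : ℕ :=
  sInf {n : ℕ | ∀ c : Sym2 (Fin n) → Fin k, HasRainbowTriangle c ∨ HasMonoCopy c H}

/-- The `2`-color Ramsey number `R(G, H)`: the least `n` such that every red/blue
(`0`/`1`) coloring of the edges of `K_n` contains a red copy of `G` or a blue copy of `H`. -/
noncomputable def ramsey2 {α β : Type*} (G : SimpleGraph α) (H : SimpleGraph β) : ℕ :=
  sInf {n : ℕ | ∀ c : Sym2 (Fin n) → Fin 2, HasCopyIn c 0 G ∨ HasCopyIn c 1 H}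

open Finset

variable {V C α : Type*}

theorem Finset.exists_injective_forall_mem [Fintype α] {s : Finset V}
    (h : Fintype.card α ≤ #s) : ∃ f : α → V, Function.Injective f ∧ ∀ a, f a ∈ s := by
  obtain ⟨g⟩ := Function.Embedding.nonempty_of_card_le (h.trans (Fintype.card_coe s).ge)
  exact ⟨fun a => g a, Subtype.val_injective.comp g.injective, fun a => (g a).2⟩

theorem HasCopyIn.of_comp_map {W : Type*} {c : Sym2 V → C} {col : C} {H : SimpleGraph α}
    (e : W ↪ V) (h : HasCopyIn (c ∘ Sym2.map e) col H) : HasCopyIn c col H := by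
  obtain ⟨f, hf, hadj⟩ := h
  exact ⟨e ∘ f, e.injective.comp hf, hadj⟩

theorem HasMonoCopy.of_comp_map {W : Type*} {c : Sym2 V → C} {H : SimpleGraph α}
    (e : W ↪ V) (h : HasMonoCopy (c ∘ Sym2.map e) H) : HasMonoCopy c H :=
  h.imp fun _ => HasCopyIn.of_comp_map e

theorem hasMonoCopy_fin_two_iff {c : Sym2 V → Fin 2} {H : SimpleGraph α} :
    HasMonoCopy c H ↔ HasCopyIn c 0 H ∨ HasCopyIn c 1 H := by
  simp [HasMonoCopy, Fin.exists_fin_two]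

theorem hasCopyIn_of_forall_mem_eq [Fintype α] {c : Sym2 V → C} {col : C} (H : SimpleGraph α)
    {s : Finset V} (hs : Fintype.card α ≤ #s)
    (hcol : ∀ x ∈ s, ∀ y ∈ s, x ≠ y → c s(x, y) = col) : HasCopyIn c col H := by
  obtain ⟨f, hf, hfs⟩ := s.exists_injective_forall_mem hs
  exact ⟨f, hf, fun a b hab => hcol _ (hfs a) _ (hfs b) (hf.ne hab.ne)⟩

theorem hasCopyIn_starPlus [DecidableEq V] {c : Sym2 V → C} {col : C} {t : ℕ} (ht : 3 ≤ t)
    {v : V} {s : Finset V} (hv : v ∉ s) (hs : t - 1 ≤ #s) (hvs : ∀ z ∈ s, c s(v, z) = col)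
    {x y : V} (hx : x ∈ s) (hy : y ∈ s) (hxy : x ≠ y) (hcxy : c s(x, y) = col) :
    HasCopyIn c col (starPlus t) := by
  obtain ⟨k, rfl⟩ := Nat.exists_eq_add_of_le' ht
  have hk : Fintype.card (Fin k) ≤ #((s.erase x).erase y) := by
    rw [Fintype.card_fin, card_erase_of_mem (mem_erase.2 ⟨hxy.symm, hy⟩), card_erase_of_mem hx]
    omega
  obtain ⟨w, hw, hws⟩ := ((s.erase x).erase y).exists_injective_forall_mem hk
  simp only [mem_erase] at hws
  let f : Fin (k + 3) → V := Fin.cons v (Fin.cons x (Fin.cons y w))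
  have hfs : ∀ i : Fin (k + 2), f i.succ ∈ s :=
    Fin.cases hx (Fin.cases hy fun i => (hws i).2.2)
  refine ⟨f, ?_, ?_⟩
  · have hxw : x ∉ Set.range w := by rintro ⟨i, rfl⟩; exact (hws i).2.1 rfl
    have hyw : y ∉ Set.range w := by rintro ⟨i, rfl⟩; exact (hws i).1 rfl
    have hv' : v ∉ Set.range (Fin.cons x (Fin.cons y w) : Fin (k + 2) → V) := by
      rintro ⟨i, hi⟩; exact hv (hi ▸ hfs i)
    simp only [f, Fin.cons_injective_iff]
    exact ⟨hv', by simpa [Fin.range_cons, hxy] using hxw, hyw, hw⟩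
  · have key : ∀ a b : Fin (k + 3), a ≠ b → a.val = 0 ∨ (a.val = 1 ∧ b.val = 2) →
        c s(f a, f b) = col := by
      rintro ⟨a, ha⟩ ⟨b, hb⟩ hab (rfl | ⟨rfl, rfl⟩)
      · obtain ⟨b, rfl⟩ : ∃ b', b = b' + 1 := Nat.exists_eq_add_one.2 (by grind)
        exact hvs _ (hfs ⟨b, by omega⟩)
      · exact hcxy
    rintro a b ⟨hab, hr | hr⟩
    · exact key a b hab hr
    · rw [Sym2.eq_swap]; exact key b a hab.symm hr

theorem hasMonoCopy_starPlus_of_card_le [Fintype V] [DecidableEq V] {t : ℕ} (ht : 3 ≤ t)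
    (c : Sym2 V → Fin 2) (hV : 2 * t ≤ Fintype.card V) : HasMonoCopy c (starPlus t) := by
  obtain ⟨v⟩ : Nonempty V := Fintype.card_pos_iff.1 (by omega)
  obtain ⟨col, -, hcol⟩ := exists_lt_card_fiber_of_mul_lt_card_of_maps_to
    (s := univ.erase v) (t := univ) (f := fun z => c s(v, z)) (n := t - 1)
    (fun _ _ => mem_univ _)
    (by simp only [card_univ, Fintype.card_fin, card_erase_of_mem (mem_univ v)]; omega)
  set s := {z ∈ univ.erase v | c s(v, z) = col}
  have hv : v ∉ s := by simp [s]
  have hvs : ∀ z ∈ s, c s(v, z) = col := fun z hz => (mem_filter.1 hz).2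
  by_cases hin : ∃ x ∈ s, ∃ y ∈ s, x ≠ y ∧ c s(x, y) = col
  · obtain ⟨x, hx, y, hy, hxy, hcxy⟩ := hin
    exact ⟨col, hasCopyIn_starPlus ht hv (by omega) hvs hx hy hxy hcxy⟩
  · push Not at hin
    have hother : ∀ d e : Fin 2, d ≠ e → d = e.rev := by decide
    exact ⟨col.rev, hasCopyIn_of_forall_mem_eq _ (by rw [Fintype.card_fin]; omega)
      fun x hx y hy hxy => hother _ _ (hin x hx y hy hxy)⟩

theorem starPlus_adj_of_val_eq_zero {t : ℕ} {i j : Fin t} (hi : (i : ℕ) = 0) (hij : i ≠ j) :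
    (starPlus t).Adj i j := by
  simp [starPlus, hi, hij]

theorem starPlus_adj_one_two {t : ℕ} (ht : 2 < t) :
    (starPlus t).Adj ⟨1, by omega⟩ ⟨2, ht⟩ := by
  simp [starPlus]

def splitColoring [DecidableEq V] (S : Finset V) : Sym2 V → Fin 2 :=
  Sym2.lift ⟨fun a b => if (a ∈ S ↔ b ∈ S) then 0 else 1, fun a b => by simp only [Iff.comm]⟩

@[simp]
theorem splitColoring_mk [DecidableEq V] (S : Finset V) (a b : V) :
    splitColoring S s(a, b) = if (a ∈ S ↔ b ∈ S) then 0 else 1 :=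
  rfl

theorem not_hasCopyIn_zero_splitColoring_starPlus [Fintype V] [DecidableEq V] {S : Finset V}
    {t : ℕ} (hS : #S < t) (hSc : #Sᶜ < t) : ¬HasCopyIn (splitColoring S) 0 (starPlus t) := by
  rintro ⟨f, hf, hadj⟩
  let o : Fin t := ⟨0, by omega⟩
  have hside : ∀ i, f i ∈ S ↔ f o ∈ S := by
    intro i
    by_cases hi : o = i
    · rw [hi]
    · have := hadj o i (starPlus_adj_of_val_eq_zero rfl hi)
      simp only [splitColoring_mk, ite_eq_left_iff, one_ne_zero, imp_false, not_not] at this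
      exact this.symm
  have hcard : ∀ T : Finset V, (∀ i, f i ∈ T) → t ≤ #T := fun T hT => by
    simpa using card_le_card_of_injOn (s := univ) f (fun i _ => hT i) hf.injOn
  by_cases ho : f o ∈ S
  · exact hS.not_ge (hcard S fun i => (hside i).2 ho)
  · exact hSc.not_ge (hcard Sᶜ fun i => mem_compl.2 fun hi => ho ((hside i).1 hi))

theorem not_hasCopyIn_one_splitColoring_starPlus [DecidableEq V] (S : Finset V) {t : ℕ}
    (ht : 3 ≤ t) : ¬HasCopyIn (splitColoring S) 1 (starPlus t) := by
  rintro ⟨f, -, hadj⟩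
  have h01 := hadj ⟨0, by omega⟩ ⟨1, by omega⟩ (starPlus_adj_of_val_eq_zero rfl (by simp))
  have h02 := hadj ⟨0, by omega⟩ ⟨2, by omega⟩ (starPlus_adj_of_val_eq_zero rfl (by simp))
  have h12 := hadj _ _ (starPlus_adj_one_two ht)
  simp only [splitColoring_mk, ite_eq_right_iff, zero_ne_one, imp_false] at h01 h02 h12
  tauto

theorem not_hasMonoCopy_splitColoring_starPlus [Fintype V] [DecidableEq V] {S : Finset V}
    {t : ℕ} (ht : 3 ≤ t) (hS : #S < t) (hSc : #Sᶜ < t) :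
    ¬HasMonoCopy (splitColoring S) (starPlus t) := by
  rw [hasMonoCopy_fin_two_iff]
  exact not_or.2 ⟨not_hasCopyIn_zero_splitColoring_starPlus hS hSc,
    not_hasCopyIn_one_splitColoring_starPlus S ht⟩

theorem lt_ramsey2_self {H : SimpleGraph α}
    (hR : ∃ n, ∀ c : Sym2 (Fin n) → Fin 2, HasMonoCopy c H) {m : ℕ}
    (c : Sym2 (Fin m) → Fin 2) (hc : ¬HasMonoCopy c H) : m < ramsey2 H H := by
  by_contra! hle
  have hmem : ramsey2 H H ∈
      {n : ℕ | ∀ c : Sym2 (Fin n) → Fin 2, HasCopyIn c 0 H ∨ HasCopyIn c 1 H} :=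
    Nat.sInf_mem (hR.imp fun n h c => hasMonoCopy_fin_two_iff.1 (h c))
  exact hc (.of_comp_map (Fin.castLEEmb hle) (hasMonoCopy_fin_two_iff.2 (hmem _)))

/-- For every `t ≥ 3`, there is a 2-coloring of the edges of the complete graph on
`2t - 2` vertices with no monochromatic copy of `S_t^+`; consequently
`R(S_t^+, S_t^+) ≥ 2t - 1`. -/
theorem ramsey_starPlus_lower (t : ℕ) (ht : 3 ≤ t) :
    (∃ c : Sym2 (Fin (2 * t - 2)) → Fin 2, ¬ HasMonoCopy c (starPlus t)) ∧
    2 * t - 1 ≤ ramsey2 (starPlus t) (starPlus t) := by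
  let S : Finset (Fin (2 * t - 2)) := {i | (i : ℕ) < t - 1}
  have hS : #S = t - 1 := by simp [S, Fin.card_filter_val_lt]; omega
  have hc := not_hasMonoCopy_splitColoring_starPlus (S := S) ht (by omega)
    (by rw [card_compl, hS, Fintype.card_fin]; omega)
  refine ⟨⟨_, hc⟩, ?_⟩
  have := lt_ramsey2_self ⟨2 * t, fun c => hasMonoCopy_starPlus_of_card_le ht c (by simp)⟩ _ hc
  omega
end

section
/- For every even integer k ≥ 2 and every integer t ≥ 3, there exists a coloring of the edges of the complete graph on 2(t − 1)·5^{(k−2)/2} vertices using k colors that contains no rainbow triangle and no monochromatic copy of S_t^+. -/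
open SimpleGraph

/-!
Gallai substitution: if `d` colors `K_W` and `c` colors `K_V`, color `K_{W × V}` by `c` inside
each fibre `{w} × V` and by `d` between fibres, with disjoint palettes. A triangle either lies in
one fibre, meets three fibres, or has two vertices in one fibre, and then its two edges leaving
that fibre share a color; so no rainbow triangle appears if neither `c` nor `d` has one. A
monochromatic `S_t^+` in a color of `c` lies in one fibre, since its center is adjacent to every
other vertex; in a color of `d` its triangle would be a monochromatic triangle of `d`.
Starting from `K_2` substituted with `K_{t-1}` (one color each) and substituting repeatedly into
the pentagon coloring of `K_5`, which has two colors and no monochromatic triangle, each step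
multiplies the number of vertices by `5` and adds two colors.
-/

section Substitution

variable {V W C D α : Type*} [DecidableEq W]

def HasMonoTriangle (c : Sym2 V → C) : Prop :=
  ∃ u v w : V, u ≠ v ∧ u ≠ w ∧ v ≠ w ∧ c s(u, v) = c s(u, w) ∧ c s(u, v) = c s(v, w)

def blowup (d : Sym2 W → D) (c : Sym2 V → C) : Sym2 (W × V) → C ⊕ D :=
  Sym2.lift ⟨fun x y => if x.1 = y.1 then .inl (c s(x.2, y.2)) else .inr (d s(x.1, y.1)),
    fun x y => by simp only [eq_comm, Sym2.eq_swap]⟩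

variable {d : Sym2 W → D} {c : Sym2 V → C}

@[simp]
lemma blowup_mk (x y : W × V) :
    blowup d c s(x, y) =
      if x.1 = y.1 then Sum.inl (c s(x.2, y.2)) else Sum.inr (d s(x.1, y.1)) :=
  rfl

lemma blowup_mk_eq_inl_iff {x y : W × V} {col : C} :
    blowup d c s(x, y) = .inl col ↔ x.1 = y.1 ∧ c s(x.2, y.2) = col := by
  by_cases h : x.1 = y.1 <;> simp [h]

lemma blowup_mk_eq_inr_iff {x y : W × V} {col : D} :
    blowup d c s(x, y) = .inr col ↔ x.1 ≠ y.1 ∧ d s(x.1, y.1) = col := by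
  by_cases h : x.1 = y.1 <;> simp [h]

lemma blowup_mk_left_congr {x y z : W × V} (hxy : x.1 = y.1) (hxz : x.1 ≠ z.1) :
    blowup d c s(x, z) = blowup d c s(y, z) := by
  simp [hxz, ← hxy]

lemma not_hasRainbowTriangle_blowup (hd : ¬ HasRainbowTriangle d)
    (hc : ¬ HasRainbowTriangle c) : ¬ HasRainbowTriangle (blowup d c) := by
  rintro ⟨u, v, w, huv, huw, hvw, h₁, h₂, h₃⟩
  by_cases euv : u.1 = v.1 <;> by_cases euw : u.1 = w.1
  · have huv' : u.2 ≠ v.2 := fun h => huv (Prod.ext euv h)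
    have huw' : u.2 ≠ w.2 := fun h => huw (Prod.ext euw h)
    have hvw' : v.2 ≠ w.2 := fun h => hvw (Prod.ext (euv.symm.trans euw) h)
    have evw : v.1 = w.1 := euv.symm.trans euw
    simp only [blowup_mk, euv, evw, if_true, ne_eq, Sum.inl.injEq] at h₁ h₂ h₃
    exact hc ⟨u.2, v.2, w.2, huv', huw', hvw', h₁, h₂, h₃⟩
  · exact h₃ (blowup_mk_left_congr euv euw)
  · rw [Sym2.eq_swap (a := v), ← blowup_mk_left_congr euw euv] at h₂
    exact h₂ rfl
  · by_cases evw : v.1 = w.1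
    · rw [Sym2.eq_swap, Sym2.eq_swap (a := u), blowup_mk_left_congr evw (Ne.symm euv)] at h₁
      exact h₁ rfl
    · simp only [blowup_mk, euv, euw, evw, if_false, ne_eq, Sum.inr.injEq] at h₁ h₂ h₃
      exact hd ⟨u.1, v.1, w.1, euv, euw, evw, h₁, h₂, h₃⟩

variable {H : SimpleGraph α}

lemma HasCopyIn.of_blowup_inl (hdom : ∃ a, ∀ b, b ≠ a → H.Adj a b) {col : C}
    (h : HasCopyIn (blowup d c) (.inl col) H) : HasCopyIn c col H := by
  obtain ⟨f, hf, hcol⟩ := h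
  obtain ⟨a₀, ha₀⟩ := hdom
  have hfibre : ∀ a, (f a).1 = (f a₀).1 := fun a => by
    by_cases ha : a = a₀
    · rw [ha]
    · exact (blowup_mk_eq_inl_iff.1 (hcol _ _ (ha₀ a ha))).1.symm
  exact ⟨fun a => (f a).2, fun a b hab => hf (Prod.ext ((hfibre a).trans (hfibre b).symm) hab),
    fun a b hab => (blowup_mk_eq_inl_iff.1 (hcol a b hab)).2⟩

lemma HasCopyIn.hasMonoTriangle_of_blowup_inr (htri : ¬ H.CliqueFree 3) {col : D}
    (h : HasCopyIn (blowup d c) (.inr col) H) : HasMonoTriangle d := by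
  classical
  obtain ⟨f, -, hcol⟩ := h
  obtain ⟨s, hs⟩ := not_forall.1 htri
  obtain ⟨a, b, e, hab, hae, hbe, -⟩ := SimpleGraph.is3Clique_iff.1 (not_not.1 hs)
  obtain ⟨nab, cab⟩ := blowup_mk_eq_inr_iff.1 (hcol a b hab)
  obtain ⟨nae, cae⟩ := blowup_mk_eq_inr_iff.1 (hcol a e hae)
  obtain ⟨nbe, cbe⟩ := blowup_mk_eq_inr_iff.1 (hcol b e hbe)
  exact ⟨(f a).1, (f b).1, (f e).1, nab, nae, nbe, cab.trans cae.symm, cab.trans cbe.symm⟩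

lemma not_hasMonoCopy_blowup (hdom : ∃ a, ∀ b, b ≠ a → H.Adj a b) (htri : ¬ H.CliqueFree 3)
    (hd : ¬ HasMonoTriangle d) (hc : ¬ HasMonoCopy c H) : ¬ HasMonoCopy (blowup d c) H := by
  rintro ⟨col | col, h⟩
  · exact hc ⟨col, HasCopyIn.of_blowup_inl hdom h⟩
  · exact hd (HasCopyIn.hasMonoTriangle_of_blowup_inr htri h)

end Substitution

section Relabel

variable {V V' C C' α : Type*} {c : Sym2 V → C}

lemma HasRainbowTriangle.of_comp {g : C → C'} {e : V' → V} (he : e.Injective)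
    (h : HasRainbowTriangle (g ∘ c ∘ Sym2.map e)) : HasRainbowTriangle c := by
  obtain ⟨u, v, w, huv, huw, hvw, h₁, h₂, h₃⟩ := h
  exact ⟨e u, e v, e w, he.ne huv, he.ne huw, he.ne hvw, fun h => h₁ (by simp [h]),
    fun h => h₂ (by simp [h]), fun h => h₃ (by simp [h])⟩

lemma HasCopyIn.of_comp {H : SimpleGraph α} {g : C → C'} (hg : g.Injective) {e : V' → V}
    (he : e.Injective) {col : C} (h : HasCopyIn (g ∘ c ∘ Sym2.map e) (g col) H) :
    HasCopyIn c col H := by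
  obtain ⟨f, hf, hcol⟩ := h
  exact ⟨e ∘ f, he.comp hf, fun a b hab => hg (by simpa using hcol a b hab)⟩

lemma exists_fin_coloring_of_card_eq [Fintype V] [Fintype C] {H : SimpleGraph α} {n k : ℕ}
    (hV : Fintype.card V = n) (hC : Fintype.card C = k)
    (hr : ¬ HasRainbowTriangle c) (hm : ¬ HasMonoCopy c H) :
    ∃ c' : Sym2 (Fin n) → Fin k, ¬ HasRainbowTriangle c' ∧ ¬ HasMonoCopy c' H := by
  let eV := Fintype.equivFinOfCardEq hV
  let eC := Fintype.equivFinOfCardEq hC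
  refine ⟨eC ∘ c ∘ Sym2.map eV.symm,
    fun h => hr (HasRainbowTriangle.of_comp eV.symm.injective h), ?_⟩
  rintro ⟨col, h⟩
  rw [← eC.apply_symm_apply col] at h
  exact hm ⟨_, HasCopyIn.of_comp eC.injective eV.symm.injective h⟩

end Relabel

lemma not_hasRainbowTriangle_of_subsingleton {V C : Type*} [Subsingleton C] (c : Sym2 V → C) :
    ¬ HasRainbowTriangle c :=
  fun ⟨_, _, _, _, _, _, h, _⟩ => h (Subsingleton.elim _ _)

lemma not_hasRainbowTriangle_of_fin_two {V : Type*} (c : Sym2 V → Fin 2) :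
    ¬ HasRainbowTriangle c := by
  rintro ⟨u, v, w, -, -, -, h₁, h₂, h₃⟩
  omega

lemma not_hasMonoCopy_of_card_lt {V C α : Type*} [Fintype V] [Fintype α] {H : SimpleGraph α}
    (c : Sym2 V → C) (h : Fintype.card V < Fintype.card α) : ¬ HasMonoCopy c H :=
  fun ⟨_, f, hf, _⟩ => (Fintype.card_le_of_injective f hf).not_gt h

lemma not_hasMonoTriangle_of_card_lt_three {V C : Type*} [Fintype V] (c : Sym2 V → C)
    (h : Fintype.card V < 3) : ¬ HasMonoTriangle c := by
  classical
  rintro ⟨u, v, w, huv, huw, hvw, -⟩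
  have : ({u, v, w} : Finset V).card = 3 := Finset.card_eq_three.2 ⟨u, v, w, huv, huw, hvw, rfl⟩
  have := Finset.card_le_univ ({u, v, w} : Finset V)
  omega

-- Both color classes are 5-cycles (`a ~ a ± 1` and `a ~ a ± 2`), hence triangle-free.
def pentagonColoring : Sym2 (ZMod 5) → Fin 2 :=
  Sym2.lift ⟨fun a b => if a - b = 1 ∨ b - a = 1 then 0 else 1, fun a b => by simp only [or_comm]⟩

lemma not_hasMonoTriangle_pentagonColoring : ¬ HasMonoTriangle pentagonColoring := by
  simp only [HasMonoTriangle, pentagonColoring, Sym2.lift_mk]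
  decide

lemma exists_coloring_of_dominating_of_not_cliqueFree [Fintype α] {H : SimpleGraph α}
    (hdom : ∃ a, ∀ b, b ≠ a → H.Adj a b) (htri : ¬ H.CliqueFree 3) (m : ℕ) :
    ∃ c : Sym2 (Fin (2 * (Fintype.card α - 1) * 5 ^ m)) → Fin (2 * m + 2),
      ¬ HasRainbowTriangle c ∧ ¬ HasMonoCopy c H := by
  induction m with
  | zero =>
    have hα : 0 < Fintype.card α := Fintype.card_pos_iff.2 ⟨hdom.choose⟩
    let c := blowup (fun _ : Sym2 (Fin 2) => ()) (fun _ : Sym2 (Fin (Fintype.card α - 1)) => ())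
    refine exists_fin_coloring_of_card_eq (c := c) (by simp) (by simp)
      (not_hasRainbowTriangle_blowup (not_hasRainbowTriangle_of_subsingleton _)
        (not_hasRainbowTriangle_of_subsingleton _)) ?_
    refine not_hasMonoCopy_blowup hdom htri (not_hasMonoTriangle_of_card_lt_three _ (by simp)) ?_
    exact not_hasMonoCopy_of_card_lt _ (by simp; omega)
  | succ m ih =>
    obtain ⟨c, hr, hm⟩ := ih
    refine exists_fin_coloring_of_card_eq (c := blowup pentagonColoring c)
      (by simp [ZMod.card]; ring) (by simp; ring)
      (not_hasRainbowTriangle_blowup (not_hasRainbowTriangle_of_fin_two _) hr)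
      (not_hasMonoCopy_blowup hdom htri not_hasMonoTriangle_pentagonColoring hm)

lemma starPlus_adj_zero {t : ℕ} (a b : Fin t) (ha : a.val = 0) (hab : b ≠ a) :
    (starPlus t).Adj a b := by
  simp [starPlus, ha, hab.symm]

lemma not_cliqueFree_three_starPlus {t : ℕ} (ht : 3 ≤ t) : ¬ (starPlus t).CliqueFree 3 := by
  intro h
  refine h {⟨0, by omega⟩, ⟨1, by omega⟩, ⟨2, by omega⟩} (SimpleGraph.is3Clique_triple_iff.2 ?_)
  simp [starPlus, Fin.ext_iff]

/-- For every even `k ≥ 2` and `t ≥ 3`, there is a `k`-coloring of the edges of the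
complete graph on `2(t-1)·5^((k-2)/2)` vertices with no rainbow triangle and no
monochromatic copy of `S_t^+`. -/
theorem gallaiRamsey_starPlus_lower_even (k t : ℕ) (hk : 2 ≤ k) (hke : Even k) (ht : 3 ≤ t) :
    ∃ c : Sym2 (Fin (2 * (t - 1) * 5 ^ ((k - 2) / 2))) → Fin k,
      ¬ HasRainbowTriangle c ∧ ¬ HasMonoCopy c (starPlus t) := by
  obtain ⟨m, rfl⟩ : ∃ m, k = 2 * m + 2 := ⟨(k - 2) / 2, by grind⟩
  have hdom : ∃ a, ∀ b, b ≠ a → (starPlus t).Adj a b :=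
    ⟨⟨0, by omega⟩, fun b hb => starPlus_adj_zero _ b rfl hb⟩
  have h :=
    exists_coloring_of_dominating_of_not_cliqueFree hdom (not_cliqueFree_three_starPlus ht) m
  rw [Fintype.card_fin] at h
  rwa [Nat.add_sub_cancel, Nat.mul_div_cancel_left m two_pos]
end

section
/- Let t ≥ 3 and let the edges of a complete graph be colored so that the coloring contains no monochromatic copy of S_t^+ in the color red. Suppose H'_1, H'_2, …, H'_{m'} are pairwise disjoint nonempty vertex sets, each of size at most t − 2, such that every edge between two distinct sets H'_i and H'_j is red. Then |H'_1| + |H'_2| + ⋯ + |H'_{m'}| ≤ 2t − 4. -/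
/-! If the parts had more than `2t - 4` vertices in total, pick a vertex `u` in some part. The
other parts then hold at least `t - 1` vertices, all joined to `u` in red, and since no part has
`t - 1` vertices, two of them, `v` and `w`, lie in different parts, so `vw` is red too. Then `u`
is the centre of a red `S_t^+` whose triangle is `uvw`. -/

open SimpleGraph

theorem hasCopyIn_starPlus_of_center {V C : Type*} [DecidableEq V] {c : Sym2 V → C} {col : C}
    {t : ℕ} (ht : 3 ≤ t) {u v w : V} {U : Finset V} (hu : u ∉ U) (hU : t - 1 ≤ U.card)
    (hcenter : ∀ x ∈ U, c s(u, x) = col) (hv : v ∈ U) (hw : w ∈ U) (hvw : v ≠ w)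
    (htriangle : c s(v, w) = col) : HasCopyIn c col (starPlus t) := by
  obtain ⟨n, rfl⟩ : ∃ n, t = n + 3 := ⟨t - 3, by omega⟩
  obtain ⟨g⟩ : Nonempty (Fin n ↪ ((U.erase v).erase w)) := by
    apply Function.Embedding.nonempty_of_card_le
    rw [Fintype.card_fin, Fintype.card_coe, Finset.card_erase_of_mem (by simp [hw, hvw.symm]),
      Finset.card_erase_of_mem hv]
    omega
  set leaves : Fin (n + 2) → V := Fin.cons v (Fin.cons w fun i => (g i : V))
  have hleaves_mem : ∀ i, leaves i ∈ U :=
    Fin.cases hv (Fin.cases hw fun i => Finset.mem_of_mem_erase (Finset.mem_of_mem_erase (g i).2))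
  have hleaves_inj : Function.Injective leaves := by
    refine Fin.cons_injective_iff.2 ⟨?_, Fin.cons_injective_iff.2 ⟨?_, ?_⟩⟩
    · rintro ⟨i, hi⟩
      induction i using Fin.cases with
      | zero => exact hvw hi.symm
      | succ i => exact Finset.ne_of_mem_erase (Finset.mem_of_mem_erase (g i).2) hi
    · rintro ⟨i, hi⟩
      exact Finset.ne_of_mem_erase (g i).2 hi
    · exact Subtype.val_injective.comp g.injective
  set f : Fin (n + 3) → V := Fin.cons u leaves
  refine ⟨f, Fin.cons_injective_iff.2 ⟨fun ⟨i, hi⟩ => hu (hi ▸ hleaves_mem i), hleaves_inj⟩, ?_⟩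
  have key : ∀ a b, a ≠ b → (a.val = 0 ∨ (a.val = 1 ∧ b.val = 2)) → c s(f a, f b) = col := by
    rintro a b hab (ha | ⟨ha, hb⟩)
    · obtain rfl : a = 0 := Fin.ext ha
      obtain ⟨b, rfl⟩ := Fin.exists_succ_eq.2 hab.symm
      exact hcenter _ (hleaves_mem b)
    · obtain rfl : a = 1 := Fin.ext ha
      obtain rfl : b = 2 := Fin.ext hb
      exact htriangle
  intro a b hadj
  obtain ⟨hab, h | h⟩ := (SimpleGraph.fromRel_adj _ a b).1 hadj
  · exact key a b hab h
  · rw [Sym2.eq_swap]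
    exact key b a hab.symm h

theorem exists_mem_notMem_of_card_lt_card_biUnion {ι V : Type*} [DecidableEq V] {s : Finset ι}
    {H : ι → Finset V} {n : ℕ} (hcard : ∀ i ∈ s, (H i).card ≤ n) (hlt : n < (s.biUnion H).card) :
    ∃ j ∈ s, ∃ k ∈ s, ∃ v ∈ H j, ∃ w ∈ H k, w ∉ H j := by
  obtain ⟨v, hv⟩ := Finset.card_pos.1 (by omega : 0 < (s.biUnion H).card)
  obtain ⟨j, hj, hvj⟩ := Finset.mem_biUnion.1 hv
  obtain ⟨w, hw⟩ : (s.biUnion H \ H j).Nonempty := by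
    have := Finset.le_card_sdiff (H j) (s.biUnion H)
    have := hcard j hj
    exact Finset.card_pos.1 (by omega)
  obtain ⟨hwU, hwj⟩ := Finset.mem_sdiff.1 hw
  obtain ⟨k, hk, hwk⟩ := Finset.mem_biUnion.1 hwU
  exact ⟨j, hj, k, hk, v, hvj, w, hwk, hwj⟩

theorem claim_allSmall_general {V : Type*} [DecidableEq V] {C : Type*} (t : ℕ) (ht : 3 ≤ t)
    (c : Sym2 V → C) (red : C)
    (hnored : ¬ HasCopyIn c red (starPlus t))
    (m : ℕ) (H' : Fin m → Finset V)
    (hcard : ∀ i, (H' i).card ≤ t - 2)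
    (hdisj : ∀ i j, i ≠ j → Disjoint (H' i) (H' j))
    (hredE : ∀ i j, i ≠ j → ∀ u ∈ H' i, ∀ v ∈ H' j, c s(u, v) = red) :
    ∑ i, (H' i).card ≤ 2 * t - 4 := by
  by_contra! hsum
  obtain ⟨i₀, -, hi₀⟩ := Finset.exists_ne_zero_of_sum_ne_zero (by omega : ∑ i, (H' i).card ≠ 0)
  obtain ⟨u, hu⟩ := Finset.card_ne_zero.1 hi₀
  set U := (Finset.univ.erase i₀).biUnion H'
  have hU : t - 1 ≤ U.card := by
    have hsplit := Finset.add_sum_erase Finset.univ (fun i => (H' i).card) (Finset.mem_univ i₀)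
    rw [Finset.card_biUnion fun i _ j _ hij => hdisj i j hij]
    have := hcard i₀
    omega
  obtain ⟨j, hj, k, hk, v, hvj, w, hwk, hwj⟩ :=
    exists_mem_notMem_of_card_lt_card_biUnion (fun i _ => hcard i) (by omega : t - 2 < U.card)
  refine hnored (hasCopyIn_starPlus_of_center ht (u := u) ?_ hU ?_
    (Finset.mem_biUnion.2 ⟨j, hj, hvj⟩) (Finset.mem_biUnion.2 ⟨k, hk, hwk⟩)
    (fun h => hwj (h ▸ hvj)) (hredE j k (fun h => hwj (h ▸ hwk)) v hvj w hwk))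
  · intro huU
    obtain ⟨l, hl, hul⟩ := Finset.mem_biUnion.1 huU
    exact Finset.disjoint_left.1 (hdisj i₀ l (Finset.ne_of_mem_erase hl).symm) hu hul
  · intro x hx
    obtain ⟨l, hl, hxl⟩ := Finset.mem_biUnion.1 hx
    exact hredE i₀ l (Finset.ne_of_mem_erase hl).symm u hu x hxl

/-- If a coloring of the edges of a complete graph has no red copy of `S_t^+` (`t ≥ 3`),
and `H' 0, …, H' (m-1)` are pairwise disjoint nonempty vertex sets, each of size at most
`t - 2`, with all edges between distinct sets red, then the total number of vertices in
these sets is at most `2t - 4`. -/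
theorem claim_allSmall {V : Type*} [DecidableEq V] {C : Type*} (t : ℕ) (ht : 3 ≤ t)
    (c : Sym2 V → C) (red : C)
    (hnored : ¬ HasCopyIn c red (starPlus t))
    (m : ℕ) (H' : Fin m → Finset V)
    (hne : ∀ i, (H' i).Nonempty)
    (hcard : ∀ i, (H' i).card ≤ t - 2)
    (hdisj : ∀ i j, i ≠ j → Disjoint (H' i) (H' j))
    (hredE : ∀ i j, i ≠ j → ∀ u ∈ H' i, ∀ v ∈ H' j, c s(u, v) = red) :
    ∑ i, (H' i).card ≤ 2 * t - 4 :=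
  claim_allSmall_general t ht c red hnored m H' hcard hdisj hredE
end

section
/- Let t ≥ 3 and let the edges of a complete graph be colored with red and blue among other possible colors. Suppose H_1 and H_2 are disjoint vertex sets, each of size at least t − 1, such that all edges between H_1 and H_2 are blue, and suppose H_3 and H_4 are two disjoint nonempty vertex sets, disjoint from H_1 ∪ H_2, such that all edges from H_3 to H_1 and from H_4 to H_1 are red, all edges from H_3 to H_2 and from H_4 to H_2 are blue, and all edges between H_3 and H_4 have a single common color. Then the coloring contains a monochromatic copy of S_t^+ (a red copy if the edges between H_3 and H_4 are red, and a blue copy if they are blue). -/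
open SimpleGraph

/-! Pick `u ∈ H3` and `v ∈ H4`. The edge `uv` has color `col`; if `col` is red, every edge from
`u` or `v` to `H1` is red as well, so `u` (center), `v` and `t - 2` vertices of `H1` span a red
`S_t^+` whose triangle is `u v w`. If `col` is blue, the same works with `H2` in place of `H1`. -/

theorem hasCopyIn_starPlus_of_book {V C : Type*} (c : Sym2 V → C) (col : C) {n : ℕ}
    {u v : V} {H : Finset V} (huv : u ≠ v) (hu : u ∉ H) (hv : v ∉ H) (hcard : n ≤ H.card)
    (huv_col : c s(u, v) = col) (huH : ∀ w ∈ H, c s(u, w) = col)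
    (hvH : ∀ w ∈ H, c s(v, w) = col) :
    HasCopyIn c col (starPlus (n + 2)) := by
  obtain ⟨g⟩ : Nonempty (Fin n ↪ H) :=
    Function.Embedding.nonempty_of_card_le (by simpa using hcard)
  have hgH : ∀ i, (g i : V) ∈ H := fun i => (g i).2
  let f : Fin (n + 2) → V := Fin.cons u (Fin.cons v fun i => (g i : V))
  have hcol : ∀ a b, a ≠ b → a.val = 0 ∨ (a.val = 1 ∧ b.val = 2) → c s(f a, f b) = col := by
    intro a b hne hab
    cases a using Fin.cases with
    | zero =>
      cases b using Fin.cases with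
      | zero => exact absurd rfl hne
      | succ b =>
        cases b using Fin.cases with
        | zero => simpa [f] using huv_col
        | succ i => simpa [f] using huH _ (hgH i)
    | succ a =>
      have ha : a = 0 := by
        rcases hab with h | ⟨h, -⟩
        · exact absurd (Fin.ext h) (Fin.succ_ne_zero a)
        · rw [Fin.val_succ] at h
          exact Fin.ext (by rw [Fin.val_zero]; omega)
      subst ha
      cases b using Fin.cases with
      | zero => simp at hab
      | succ b =>
        cases b using Fin.cases with
        | zero => simp at hab
        | succ i => simpa [f] using hvH _ (hgH i)
  refine ⟨f, ?_, ?_⟩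
  · simp only [f, Fin.cons_injective_iff, Set.mem_range, not_exists]
    refine ⟨?_, fun i h => hv (h ▸ hgH i), fun i j h => g.injective (Subtype.ext h)⟩
    simp only [Fin.forall_fin_succ, Fin.cons_zero, Fin.cons_succ]
    exact ⟨huv.symm, fun i h => hu (h ▸ hgH i)⟩
  · rintro a b ⟨hne, hab | hba⟩
    · exact hcol a b hne hab
    · rw [Sym2.eq_swap]
      exact hcol b a hne.symm hba

theorem claim_differentColors_general {V : Type*} {C : Type*} (t : ℕ) (ht : 3 ≤ t)
    (c : Sym2 V → C) (red blue : C)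
    (H1 H2 H3 H4 : Finset V)
    (h13 : Disjoint H1 H3) (h14 : Disjoint H1 H4)
    (h23 : Disjoint H2 H3) (h24 : Disjoint H2 H4) (h34 : Disjoint H3 H4)
    (hc1 : t - 1 ≤ H1.card) (hc2 : t - 1 ≤ H2.card)
    (hne3 : H3.Nonempty) (hne4 : H4.Nonempty)
    (hr31 : ∀ u ∈ H3, ∀ v ∈ H1, c s(u, v) = red)
    (hr41 : ∀ u ∈ H4, ∀ v ∈ H1, c s(u, v) = red)
    (hb32 : ∀ u ∈ H3, ∀ v ∈ H2, c s(u, v) = blue)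
    (hb42 : ∀ u ∈ H4, ∀ v ∈ H2, c s(u, v) = blue)
    (col : C) (hcol : col = red ∨ col = blue)
    (h34c : ∀ u ∈ H3, ∀ v ∈ H4, c s(u, v) = col) :
    HasCopyIn c col (starPlus t) := by
  obtain ⟨n, rfl⟩ : ∃ n, t = n + 2 := ⟨t - 2, by omega⟩
  obtain ⟨u, hu3⟩ := hne3
  obtain ⟨v, hv4⟩ := hne4
  have huv : u ≠ v := Finset.disjoint_left.mp h34 hu3 ∘ (· ▸ hv4)
  rcases hcol with rfl | rfl
  · exact hasCopyIn_starPlus_of_book c _ huv (Finset.disjoint_right.mp h13 hu3)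
      (Finset.disjoint_right.mp h14 hv4) (by omega) (h34c u hu3 v hv4)
      (hr31 u hu3) (hr41 v hv4)
  · exact hasCopyIn_starPlus_of_book c _ huv (Finset.disjoint_right.mp h23 hu3)
      (Finset.disjoint_right.mp h24 hv4) (by omega) (h34c u hu3 v hv4)
      (hb32 u hu3) (hb42 v hv4)

/-- If `H1, H2` are disjoint vertex sets of size at least `t - 1` with all blue edges in
between, and `H3, H4` are disjoint nonempty vertex sets (disjoint from `H1 ∪ H2`) with all
red edges to `H1`, all blue edges to `H2`, and a single common color `col ∈ {red, blue}` on
all edges between `H3` and `H4`, then there is a copy of `S_t^+` in color `col`. -/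
theorem claim_differentColors {V : Type*} [DecidableEq V] {C : Type*} (t : ℕ) (ht : 3 ≤ t)
    (c : Sym2 V → C) (red blue : C)
    (H1 H2 H3 H4 : Finset V)
    (h12 : Disjoint H1 H2) (h13 : Disjoint H1 H3) (h14 : Disjoint H1 H4)
    (h23 : Disjoint H2 H3) (h24 : Disjoint H2 H4) (h34 : Disjoint H3 H4)
    (hc1 : t - 1 ≤ H1.card) (hc2 : t - 1 ≤ H2.card)
    (hne3 : H3.Nonempty) (hne4 : H4.Nonempty)
    (hb12 : ∀ u ∈ H1, ∀ v ∈ H2, c s(u, v) = blue)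
    (hr31 : ∀ u ∈ H3, ∀ v ∈ H1, c s(u, v) = red)
    (hr41 : ∀ u ∈ H4, ∀ v ∈ H1, c s(u, v) = red)
    (hb32 : ∀ u ∈ H3, ∀ v ∈ H2, c s(u, v) = blue)
    (hb42 : ∀ u ∈ H4, ∀ v ∈ H2, c s(u, v) = blue)
    (col : C) (hcol : col = red ∨ col = blue)
    (h34c : ∀ u ∈ H3, ∀ v ∈ H4, c s(u, v) = col) :
    HasCopyIn c col (starPlus t) :=
  claim_differentColors_general t ht c red blue H1 H2 H3 H4 h13 h14 h23 h24 h34 hc1 hc2 hne3 hne4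
    hr31 hr41 hb32 hb42 col hcol h34c
end

section
/- Let t ≥ 5 be odd and consider a red/blue coloring of the edges of a complete graph containing a red cycle C = v_1v_2⋯v_tv_1 on t vertices such that the coloring contains no red copy of P_t^+. Then every chord of the form v_iv_{i+2} (indices modulo t) is blue, and these chords form a blue cycle of length t; moreover, if there is at least one vertex outside C, then the coloring contains a blue copy of P_t^+. -/
/-!
A red chord `v i, v (i+2)` closes the red cycle, read from `v i`, into a red `P_t^+`. A vertex
`w` off the cycle cannot have red edges to two consecutive cycle vertices, since the triangle
`w, v j, v (j+1)` extends along the cycle to a red `P_t^+`; hence `w` has blue edges to some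
`v j` and `v (j+2)`. As `t` is odd, the blue chords form the cycle `v j, v (j+2), v (j+4), …`,
and prepending `w` to it gives a blue `P_t^+`.
-/

open SimpleGraph

/-- Index rotation: the natural number `i` reduced modulo `t`, as an element of `Fin t`. -/
def finRot (t : ℕ) (ht : 0 < t) (i : ℕ) : Fin t := ⟨i % t, Nat.mod_lt _ ht⟩


open Set

section PathPlusCopies

variable {V C : Type*} {c : Sym2 V → C} {col : C} {t : ℕ}

theorem hasCopyIn_pathPlus_of_injOn {g : ℕ → V} (hg : InjOn g (Iio t))
    (hpath : ∀ k, k + 1 < t → c s(g k, g (k + 1)) = col) (htri : c s(g 0, g 2) = col) :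
    HasCopyIn c col (pathPlus t) := by
  refine ⟨fun k => g k, fun a b h => Fin.ext (hg a.isLt b.isLt h), ?_⟩
  have key : ∀ a b : Fin t, (b.val = a.val + 1 ∨ (a.val = 0 ∧ b.val = 2)) →
      c s(g a, g b) = col := by
    rintro a b (hab | ⟨ha, hb⟩)
    · rw [hab]; exact hpath a (hab ▸ b.isLt)
    · rw [ha, hb]; exact htri
  intro a b hadj
  rcases ((fromRel_adj _ a b).1 hadj).2 with h | h
  · exact key a b h
  · rw [Sym2.eq_swap]; exact key b a h

theorem hasCopyIn_pathPlus_of_cons {w : V} {s : ℕ → V} (hs : InjOn s (Iio (t - 1)))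
    (hw : ∀ k < t - 1, s k ≠ w) (h0 : c s(w, s 0) = col) (h1 : c s(w, s 1) = col)
    (hpath : ∀ k, k + 2 < t → c s(s k, s (k + 1)) = col) :
    HasCopyIn c col (pathPlus t) := by
  refine hasCopyIn_pathPlus_of_injOn (g := fun k => match k with | 0 => w | k + 1 => s k)
    ?_ ?_ h1
  · rintro (_ | a) ha (_ | b) hb h
    · rfl
    · exact absurd h.symm (hw b (by simp at hb; omega))
    · exact absurd h (hw a (by simp at ha; omega))
    · rw [hs (by simp at ha ⊢; omega) (by simp at hb ⊢; omega) h]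
  · rintro (_ | k) hk
    · exact h0
    · exact hpath k (by omega)

end PathPlusCopies

section CycleSequence

variable {V C : Type*} {c : Sym2 V → C} {col : C} {t : ℕ} {u : ℕ → V}

theorem injOn_add_mul (hu : ∀ a b, u a = u b → a ≡ b [MOD t]) {m : ℕ} (hm : t.Coprime m)
    (i : ℕ) : InjOn (fun k => u (i + m * k)) (Iio t) := fun _ ha _ hb h =>
  ((hu _ _ h).add_left_cancel' i |>.cancel_left_of_coprime hm).eq_of_lt_of_lt ha hb

theorem hasCopyIn_pathPlus_of_chord (hu : ∀ a b, u a = u b → a ≡ b [MOD t])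
    (hcyc : ∀ i, c s(u i, u (i + 1)) = col) {i : ℕ} (hchord : c s(u i, u (i + 2)) = col) :
    HasCopyIn c col (pathPlus t) := by
  refine hasCopyIn_pathPlus_of_injOn (g := fun k => u (i + k)) ?_ (fun k _ => hcyc (i + k)) hchord
  simpa using injOn_add_mul hu (Nat.coprime_one_right t) i

/-- The copy is `w, u j, u (j + m), u (j + 2m), …`. -/
theorem hasCopyIn_pathPlus_of_outside {m : ℕ} (hu : ∀ a b, u a = u b → a ≡ b [MOD t])
    (hm : t.Coprime m) (hstep : ∀ i, c s(u i, u (i + m)) = col) {w : V} (hw : w ∉ range u)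
    {j : ℕ} (h0 : c s(w, u j) = col) (h1 : c s(w, u (j + m)) = col) :
    HasCopyIn c col (pathPlus t) := by
  refine hasCopyIn_pathPlus_of_cons (s := fun k => u (j + m * k))
    ((injOn_add_mul hu hm j).mono (Iio_subset_Iio (t.sub_le 1)))
    (fun k _ h => hw ⟨_, h⟩) (by simpa using h0) (by simpa using h1) (fun k _ => ?_)
  rw [mul_add, mul_one, ← add_assoc]
  exact hstep _

end CycleSequence

section RedBlue

variable {V : Type*} {t : ℕ} {c : Sym2 V → Fin 2} {u : ℕ → V}

theorem exists_blue_of_not_hasCopyIn (hu : ∀ a b, u a = u b → a ≡ b [MOD t])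
    (hcyc : ∀ i, c s(u i, u (i + 1)) = 0) (hnored : ¬ HasCopyIn c 0 (pathPlus t))
    {w : V} (hw : w ∉ range u) : ∃ j, c s(w, u j) = 1 ∧ c s(w, u (j + 2)) = 1 := by
  have hconsec : ∀ j, c s(w, u j) = 0 → c s(w, u (j + 1)) = 1 := fun j h0 =>
    Fin.eq_one_of_ne_zero _ fun h1 =>
      hnored (hasCopyIn_pathPlus_of_outside hu (Nat.coprime_one_right t) hcyc hw h0 h1)
  by_cases hred : ∃ j, c s(w, u (j + 1)) = 0
  · obtain ⟨j, hj⟩ := hred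
    refine ⟨j, Fin.eq_one_of_ne_zero _ fun h => ?_, hconsec _ hj⟩
    rw [hconsec j h] at hj
    exact one_ne_zero hj
  · push Not at hred
    exact ⟨1, Fin.eq_one_of_ne_zero _ (hred 0), Fin.eq_one_of_ne_zero _ (hred 2)⟩

end RedBlue

/-- Let `t ≥ 5` be odd and consider a red/blue (`0`/`1`) coloring of the edges of a complete
graph containing a red cycle `v 0, v 1, …, v (t-1), v 0` such that there is no red copy of
`P_t^+`.  Then every chord `v i, v (i+2)` (indices mod `t`) is blue, these chords form a
single blue cycle of length `t` (traversed as `v 0, v 2, v 4, …`), and if some vertex lies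
outside the cycle then there is a blue copy of `P_t^+`. -/
theorem red_cycle_blue_chords {V : Type*} (t : ℕ) (ht : 5 ≤ t) (hodd : Odd t)
    (c : Sym2 V → Fin 2) (v : Fin t → V) (hv : Function.Injective v)
    (hcyc : ∀ i : ℕ,
      c s(v (finRot t (by omega) i), v (finRot t (by omega) (i + 1))) = 0)
    (hnored : ¬ HasCopyIn c 0 (pathPlus t)) :
    (∀ i : ℕ,
      c s(v (finRot t (by omega) i), v (finRot t (by omega) (i + 2))) = 1) ∧
    Function.Injective (fun i : Fin t => v (finRot t (by omega) (2 * i.val))) ∧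
    ((∃ w : V, w ∉ Set.range v) → HasCopyIn c 1 (pathPlus t)) := by
  set u : ℕ → V := fun i => v (finRot t (by omega) i)
  have hu : ∀ a b, u a = u b → a ≡ b [MOD t] := fun a b h => congrArg Fin.val (hv h)
  have h2 : t.Coprime 2 := Nat.coprime_two_right.2 hodd
  have hchord : ∀ i, c s(u i, u (i + 2)) = 1 := fun i =>
    Fin.eq_one_of_ne_zero _ fun h => hnored (hasCopyIn_pathPlus_of_chord hu hcyc h)
  refine ⟨hchord, fun a b h =>
    Fin.ext (injOn_add_mul hu h2 0 a.isLt b.isLt (by simpa using h)), ?_⟩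
  rintro ⟨w, hw⟩
  have hw' : w ∉ range u := by
    rintro ⟨k, rfl⟩
    exact hw ⟨_, rfl⟩
  obtain ⟨j, h0, h1⟩ := exists_blue_of_not_hasCopyIn hu hcyc hnored hw'
  exact hasCopyIn_pathPlus_of_outside hu h2 hchord hw' h0 h1
end

section
/- Let t ≥ 5 and let the edges of a complete graph be colored with red and blue among other possible colors so that the coloring contains no monochromatic copy of P_t^+. Suppose H_1 and H_2 are disjoint vertex sets with |H_1|, |H_2| ≥ ⌈t/2⌉ and all edges between H_1 and H_2 red, and suppose A and B are vertex sets, pairwise disjoint and disjoint from H_1 ∪ H_2, such that all edges from A ∪ B to H_2 are blue, all edges from A to H_1 are red, all edges from B to H_1 are blue, and A ∪ B is partitioned into at least three parts of size at most ⌈t/2⌉ − 1 each with all edges between distinct parts of A ∪ B colored red or blue. Then |A| + |B| ≤ t − 1. -/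
open SimpleGraph

/-!
If `|A| + |B| ≥ t`, label each vertex of `A ∪ B` by a part containing it. A blue edge `uv`
between two parts spans a blue triangle with any vertex of `H₂`, and the path goes on
alternating between `H₂` and `A ∪ B`. Otherwise all edges between parts are red. Any `t`
vertices of `A ∪ B` then have fewer than `t / 2` in each part, so they can be listed with
consecutive vertices, and the first and the third, in different parts: this is a red `P_t^+`.
Such a listing is built greedily, always continuing with a most frequent admissible part.
-/

open Finset

section LabelCounts

variable {α β : Type*} [DecidableEq β] (p : α → β)

lemma card_filter_eq_add_card_filter_eq_le (s : Finset α) {b b' : β} (h : b ≠ b') :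
    #{x ∈ s | p x = b} + #{x ∈ s | p x = b'} ≤ #s := by
  calc #{x ∈ s | p x = b} + #{x ∈ s | p x = b'}
      ≤ #{x ∈ s | p x = b} + #{x ∈ s | ¬p x = b} :=
        Nat.add_le_add_left (card_le_card fun x hx => by
          simp only [mem_filter] at hx ⊢
          exact ⟨hx.1, fun hb => h (hb.symm.trans hx.2)⟩) _
    _ = #s := card_filter_add_card_filter_not _

lemma exists_mem_apply_ne {s : Finset α} {b : β} (h : #{x ∈ s | p x = b} < #s) :
    ∃ x ∈ s, p x ≠ b := by
  by_contra! hall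
  exact h.ne (congrArg card (filter_true_of_mem hall))

lemma exists_mem_forall_card_filter_le {s : Finset α} {ℓ : β} (h : ∃ x ∈ s, p x ≠ ℓ) :
    ∃ x ∈ s, p x ≠ ℓ ∧ ∀ b ≠ ℓ, #{y ∈ s | p y = b} ≤ #{y ∈ s | p y = p x} := by
  obtain ⟨x, hx, hmax⟩ := exists_max_image {y ∈ s | p y ≠ ℓ} (fun y => #{z ∈ s | p z = p y})
    (by simpa [Finset.Nonempty] using h)
  refine ⟨x, (mem_filter.1 hx).1, (mem_filter.1 hx).2, fun b hb => ?_⟩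
  rcases eq_or_ne #{y ∈ s | p y = b} 0 with h0 | h0
  · omega
  · obtain ⟨y, hy⟩ := card_ne_zero.1 h0
    rw [mem_filter] at hy
    rw [← hy.2]
    exact hmax y (mem_filter.2 ⟨hy.1, hy.2 ▸ hb⟩)

end LabelCounts

section Arrangement

variable {α β : Type*} [DecidableEq α]

def IsProperArrangement (p : α → β) (s : Finset α) (l : List α) : Prop :=
  l.Nodup ∧ l.toFinset = s ∧ l.IsChain (fun x y => p x ≠ p y)

lemma IsProperArrangement.cons {p : α → β} {s : Finset α} {x : α} {l : List α}
    (hl : IsProperArrangement p (s.erase x) l) (hx : x ∈ s) (hhead : ∀ y ∈ l.head?, p y ≠ p x) :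
    IsProperArrangement p s (x :: l) := by
  obtain ⟨hnd, hfin, hchain⟩ := hl
  refine ⟨List.nodup_cons.2 ⟨fun h => ?_, hnd⟩, ?_,
    List.isChain_cons.2 ⟨fun y hy => (hhead y hy).symm, hchain⟩⟩
  · have := List.mem_toFinset.2 h
    simp [hfin] at this
  · rw [List.toFinset_cons, hfin, insert_erase hx]

variable [DecidableEq β] (p : α → β)

lemma card_filter_erase_of_eq {s : Finset α} {x : α} (hx : x ∈ s) :
    #{y ∈ s.erase x | p y = p x} = #{y ∈ s | p y = p x} - 1 := by
  rw [filter_erase, card_erase_of_mem (s := {y ∈ s | p y = p x}) (by simp [hx])]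

lemma card_filter_erase_of_ne (s : Finset α) {x : α} {b : β} (hb : p x ≠ b) :
    #{y ∈ s.erase x | p y = b} = #{y ∈ s | p y = b} := by
  rw [filter_erase, erase_eq_of_notMem (by simp [hb])]

/-- The invariant of the greedy listing, `ℓ` being the label of the element listed last. -/
def IsArrangeableAfter (s : Finset α) (ℓ : β) : Prop :=
  (∀ b, 2 * #{x ∈ s | p x = b} ≤ #s + 1) ∧ 2 * #{x ∈ s | p x = ℓ} ≤ #s

variable {p}

lemma IsArrangeableAfter.erase {s : Finset α} {ℓ : β} (hs : IsArrangeableAfter p s ℓ)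
    {x : α} (hx : x ∈ s) (hxℓ : p x ≠ ℓ)
    (hmax : ∀ b ≠ ℓ, #{y ∈ s | p y = b} ≤ #{y ∈ s | p y = p x}) :
    IsArrangeableAfter p (s.erase x) (p x) := by
  obtain ⟨hall, hℓ⟩ := hs
  have hcard := card_erase_of_mem hx
  have hpx := hall (p x)
  have hx' := card_filter_erase_of_eq p hx
  refine ⟨fun b => ?_, by omega⟩
  rcases eq_or_ne (p x) b with rfl | hb
  · omega
  rw [card_filter_erase_of_ne p s hb]
  rcases eq_or_ne b ℓ with rfl | hbℓ
  · omega
  have := hmax b hbℓ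
  have := card_filter_eq_add_card_filter_eq_le p s hb
  omega

theorem IsArrangeableAfter.exists_properArrangement {s : Finset α} {ℓ : β}
    (hs : IsArrangeableAfter p s ℓ) :
    ∃ l, IsProperArrangement p s l ∧ ∀ x ∈ l.head?, p x ≠ ℓ := by
  induction hn : #s generalizing s ℓ with
  | zero => exact ⟨[], by simp [IsProperArrangement, card_eq_zero.1 hn], by simp⟩
  | succ n ih =>
    have hℓ : #{x ∈ s | p x = ℓ} < #s := by
      have := hs.2
      omega
    obtain ⟨x, hx, hxℓ, hmax⟩ := exists_mem_forall_card_filter_le p (exists_mem_apply_ne p hℓ)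
    obtain ⟨l, hl, hhead⟩ := ih (hs.erase hx hxℓ hmax) (by rw [card_erase_of_mem hx]; omega)
    exact ⟨x :: l, hl.cons hx hhead, by simpa using hxℓ⟩

/-- `z` has a most frequent label other than that of `x`, and `y` avoids both labels; after
removing `x` and `y`, the greedy step to `z` is still available. -/
theorem exists_properArrangement_triangle {s : Finset α} (hne : s.Nonempty)
    (hs : ∀ b, 2 * #{x ∈ s | p x = b} < #s) :
    ∃ x y z l, IsProperArrangement p s (x :: y :: z :: l) ∧ p x ≠ p z := by
  obtain ⟨x, hx⟩ := hne
  obtain ⟨z, hz, hzx, hmax⟩ :=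
    exists_mem_forall_card_filter_le p
      (exists_mem_apply_ne p (s := s) (b := p x) (by have := hs (p x); omega))
  obtain ⟨y, hy, hyx, hyz⟩ : ∃ y ∈ s, p y ≠ p x ∧ p y ≠ p z := by
    by_contra! h
    have hsub : s ⊆ {y ∈ s | p y = p x} ∪ {y ∈ s | p y = p z} := fun y hy =>
      mem_union.2 ((em (p y = p x)).imp (fun e => mem_filter.2 ⟨hy, e⟩)
        fun e => mem_filter.2 ⟨hy, h y hy e⟩)
    have := (card_le_card hsub).trans (card_union_le _ _)
    have := hs (p x)
    have := hs (p z)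
    omega
  have hy₁ : y ∈ s.erase x := mem_erase.2 ⟨ne_of_apply_ne p hyx, hy⟩
  set s₂ := (s.erase x).erase y
  have hz₂ : z ∈ s₂ :=
    mem_erase.2 ⟨ne_of_apply_ne p hyz.symm, mem_erase.2 ⟨ne_of_apply_ne p hzx, hz⟩⟩
  have hcard : #s₂ + 2 = #s := by
    have hpos := card_pos.2 ⟨y, hy₁⟩
    rw [card_erase_of_mem hx] at hpos
    rw [card_erase_of_mem hy₁, card_erase_of_mem hx]
    omega
  have hmono : ∀ b, #{w ∈ s₂ | p w = b} ≤ #{w ∈ s | p w = b} := fun b =>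
    card_le_card (filter_subset_filter _ ((erase_subset _ _).trans (erase_subset _ _)))
  have hcz : #{w ∈ s₂ | p w = p z} = #{w ∈ s | p w = p z} := by
    rw [card_filter_erase_of_ne p _ hyz, card_filter_erase_of_ne p _ hzx.symm]
  have hcx : #{w ∈ s₂ | p w = p x} = #{w ∈ s | p w = p x} - 1 := by
    rw [card_filter_erase_of_ne p _ hyx, card_filter_erase_of_eq p hx]
  have hs₂ : IsArrangeableAfter p s₂ (p x) := by
    refine ⟨fun b => ?_, ?_⟩
    · have := hmono b
      have := hs b
      omega
    · have := hs (p x)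
      omega
  obtain ⟨l, hl, hhead⟩ := (hs₂.erase hz₂ hzx fun b hb =>
    hcz ▸ (hmono b).trans (hmax b hb)).exists_properArrangement
  refine ⟨x, y, z, l, ((hl.cons hz₂ hhead).cons hy₁ ?_).cons hx ?_, hzx.symm⟩
  · simpa using hyz.symm
  · simpa using hyx

end Arrangement

section PathPlusCopies

variable {V C : Type*} {c : Sym2 V → C} {col : C}

theorem hasCopyIn_pathPlus_of_isChain {x y z : V} {l : List V} (hnd : (x :: y :: z :: l).Nodup)
    (hchain : (x :: y :: z :: l).IsChain (fun a b => c s(a, b) = col)) (hxz : c s(x, z) = col) :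
    HasCopyIn c col (pathPlus (l.length + 3)) := by
  refine ⟨fun i => (x :: y :: z :: l)[i.1], List.nodup_iff_injective_getElem.1 hnd,
    fun i j hij => ?_⟩
  have hstep := List.isChain_iff_getElem.1 hchain
  rw [pathPlus, SimpleGraph.fromRel_adj] at hij
  obtain ⟨i, hi⟩ := i
  obtain ⟨j, hj⟩ := j
  rcases hij.2 with (rfl | ⟨rfl, rfl⟩) | (rfl | ⟨rfl, rfl⟩)
  · exact hstep i hj
  · exact hxz
  · rw [Sym2.eq_swap]
    exact hstep j hi
  · rw [Sym2.eq_swap]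
    exact hxz

variable [DecidableEq V]

theorem hasCopyIn_pathPlus_of_forall_ne {ι : Type*} [DecidableEq ι] (p : V → ι) {s : Finset V}
    (hcol : ∀ x ∈ s, ∀ y ∈ s, p x ≠ p y → c s(x, y) = col) {t : ℕ} (ht : 0 < t) (hs : t ≤ #s)
    (hp : ∀ i, 2 * #{x ∈ s | p x = i} < t) :
    HasCopyIn c col (pathPlus t) := by
  obtain ⟨s', hs's, rfl⟩ := exists_subset_card_eq hs
  obtain ⟨x, y, z, l, ⟨hnd, hfin, hchain⟩, hxz⟩ := exists_properArrangement_triangle (p := p)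
    (card_pos.1 ht) fun i =>
      (Nat.mul_le_mul_left 2 (card_le_card (filter_subset_filter _ hs's))).trans_lt (hp i)
  have hmem : ∀ a ∈ x :: y :: z :: l, a ∈ s := fun a ha =>
    hs's (hfin ▸ List.mem_toFinset.2 ha)
  rw [← hfin, List.toFinset_card_of_nodup hnd]
  exact hasCopyIn_pathPlus_of_isChain hnd
    (hchain.imp_of_mem_imp fun a b ha hb => hcol a (hmem a ha) b (hmem b hb))
    (hcol x (hmem x (by simp)) z (hmem z (by simp)) hxz)

/-- Odd positions of the path, and the first two, go to `X`; even positions from `2` on go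
to `Y`. -/
theorem hasCopyIn_pathPlus_of_bipartite {X Y : Finset V} (hXY : Disjoint X Y)
    (hcol : ∀ x ∈ X, ∀ y ∈ Y, c s(x, y) = col) {u v : V} (hu : u ∈ X) (hv : v ∈ X) (huv : u ≠ v)
    (hcuv : c s(u, v) = col) {t : ℕ} (ht : 3 ≤ t) (hX : (t + 2) / 2 ≤ #X)
    (hY : (t - 1) / 2 ≤ #Y) :
    HasCopyIn c col (pathPlus t) := by
  have hW : (t - 2) / 2 ≤ #((X.erase u).erase v) := by
    rw [card_erase_of_mem (mem_erase.2 ⟨huv.symm, hv⟩), card_erase_of_mem hu]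
    omega
  obtain ⟨W, hWuv, hWcard⟩ := exists_subset_card_eq hW
  obtain ⟨Y', hY'Y, hY'card⟩ := exists_subset_card_eq hY
  have hWX : W ⊆ X := hWuv.trans ((erase_subset _ _).trans (erase_subset _ _))
  have hWY : Disjoint W Y := hXY.mono_left hWX
  have hcard : #(W ∪ Y') = t - 2 := by
    rw [card_union_of_disjoint (hWY.mono_right hY'Y)]
    omega
  have hW' : #{w ∈ W ∪ Y' | decide (w ∈ Y) = false} ≤ #W := card_le_card fun w hw => by
    simp only [mem_filter, mem_union, decide_eq_false_iff_not] at hw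
    exact hw.1.resolve_right fun h => hw.2 (hY'Y h)
  have hY' : #{w ∈ W ∪ Y' | decide (w ∈ Y) = true} ≤ #Y' := card_le_card fun w hw => by
    simp only [mem_filter, mem_union, decide_eq_true_eq] at hw
    exact hw.1.resolve_left fun h => disjoint_left.1 hWY h hw.2
  obtain ⟨l, ⟨hnd, hfin, hchain⟩, hhead⟩ :=
    IsArrangeableAfter.exists_properArrangement (p := fun w => decide (w ∈ Y))
      (s := W ∪ Y') (ℓ := false)
      ⟨fun b => by cases b <;> beta_reduce <;> omega, by beta_reduce; omega⟩
  obtain ⟨z, l, rfl⟩ : ∃ z l', l = z :: l' := by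
    cases l with
    | nil => rw [← hfin] at hcard; simp at hcard; omega
    | cons z l => exact ⟨z, l, rfl⟩
  have hzY : z ∈ Y := by simpa using hhead z rfl
  have hmem : ∀ a ∈ z :: l, a ∈ W ∪ Y' := fun a ha => hfin ▸ List.mem_toFinset.2 ha
  have hnotin : ∀ w ∈ X, w ∉ W → w ∉ z :: l := fun w hw hwW hwl =>
    (mem_union.1 (hmem w hwl)).elim hwW fun h => disjoint_left.1 hXY hw (hY'Y h)
  have hlen : l.length + 3 = t := by
    have := List.toFinset_card_of_nodup hnd
    rw [hfin, hcard] at this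
    simp at this
    omega
  subst hlen
  refine hasCopyIn_pathPlus_of_isChain (y := v) ?_ ?_ (hcol u hu z hzY)
  · refine List.nodup_cons.2 ⟨?_, List.nodup_cons.2 ⟨hnotin v hv fun h => ?_, hnd⟩⟩
    · rw [List.mem_cons, not_or]
      exact ⟨huv, hnotin u hu fun h => by simpa using hWuv h⟩
    · simpa using hWuv h
  · refine List.isChain_cons_cons.2 ⟨hcuv, List.isChain_cons_cons.2 ⟨hcol v hv z hzY, ?_⟩⟩
    have hX' : ∀ w ∈ z :: l, w ∉ Y → w ∈ X := fun w hw hwY =>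
      hWX ((mem_union.1 (hmem w hw)).resolve_right fun h => hwY (hY'Y h))
    refine hchain.imp_of_mem_imp fun a b ha hb hab => ?_
    by_cases haY : a ∈ Y
    · have hbY : b ∉ Y := by simpa [haY] using hab
      rw [Sym2.eq_swap]
      exact hcol b (hX' b hb hbY) a haY
    · have hbY : b ∈ Y := by simpa [haY] using hab
      exact hcol a (hX' a ha haY) b hbY

end PathPlusCopies

theorem claim_pathSumSmall_general {V : Type*} [DecidableEq V] {C : Type*}
    (t : ℕ) (ht : 5 ≤ t)
    (c : Sym2 V → C) (red blue : C)
    (H2 A B : Finset V)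
    (hA2 : Disjoint A H2) (hB2 : Disjoint B H2)
    (hAB : Disjoint A B)
    (hc2 : (t + 1) / 2 ≤ H2.card)
    (heAB2 : ∀ u ∈ A ∪ B, ∀ v ∈ H2, c s(u, v) = blue)
    (m : ℕ) (P : Fin m → Finset V)
    (hPcard : ∀ i, (P i).card ≤ (t + 1) / 2 - 1)
    (hPunion : Finset.univ.biUnion P = A ∪ B)
    (hPedge : ∀ i j, i ≠ j → ∀ u ∈ P i, ∀ v ∈ P j,
      c s(u, v) = red ∨ c s(u, v) = blue)
    (hmono : ¬ HasMonoCopy c (pathPlus t)) :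
    A.card + B.card ≤ t - 1 := by
  by_contra! hlarge
  have hS : t ≤ #(A ∪ B) := by
    rw [card_union_of_disjoint hAB]
    omega
  have hpart : ∀ v ∈ A ∪ B, ∃ i, v ∈ P i := fun v hv => by
    rw [← hPunion] at hv
    simpa using hv
  obtain ⟨v₀, hv₀⟩ := card_pos.1 (show 0 < #(A ∪ B) by omega)
  have : Nonempty (Fin m) := ⟨(hpart v₀ hv₀).choose⟩
  choose! p hp using hpart
  by_cases hblue : ∃ x ∈ A ∪ B, ∃ y ∈ A ∪ B, p x ≠ p y ∧ c s(x, y) = blue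
  · obtain ⟨x, hx, y, hy, hxy, hcxy⟩ := hblue
    exact hmono ⟨blue, hasCopyIn_pathPlus_of_bipartite (disjoint_union_left.2 ⟨hA2, hB2⟩) heAB2
      hx hy (ne_of_apply_ne p hxy) hcxy (by omega) (by omega) (by omega)⟩
  · push Not at hblue
    refine hmono ⟨red, hasCopyIn_pathPlus_of_forall_ne p (fun x hx y hy hxy => ?_) (by omega) hS
      fun i => ?_⟩
    · exact (hPedge _ _ hxy x (hp x hx) y (hp y hy)).resolve_right (hblue x hx y hy hxy)
    · have : #{x ∈ A ∪ B | p x = i} ≤ #(P i) := card_le_card fun x hx => by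
        rw [mem_filter] at hx
        exact hx.2 ▸ hp x hx.1
      have := hPcard i
      omega

/-- Case `r = 2`, Claim on `|A| + |B|`: with two large parts `H1, H2` (`|Hi| ≥ ⌈t/2⌉`)
joined by red edges, sets `A` (red to `H1`) and `B` (blue to `H1`), all of `A ∪ B` blue to
`H2`, where `A ∪ B` is partitioned into at least three parts of size at most `⌈t/2⌉ - 1`
with red or blue edges between distinct parts, a coloring with no monochromatic copy of
`P_t^+` forces `|A| + |B| ≤ t - 1`. -/
theorem claim_pathSumSmall {V : Type*} [DecidableEq V] {C : Type*}
    (t : ℕ) (ht : 5 ≤ t)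
    (c : Sym2 V → C) (red blue : C) (hrb : red ≠ blue)
    (H1 H2 A B : Finset V)
    (h12 : Disjoint H1 H2)
    (hA1 : Disjoint A H1) (hA2 : Disjoint A H2)
    (hB1 : Disjoint B H1) (hB2 : Disjoint B H2)
    (hAB : Disjoint A B)
    (hc1 : (t + 1) / 2 ≤ H1.card) (hc2 : (t + 1) / 2 ≤ H2.card)
    (he12 : ∀ u ∈ H1, ∀ v ∈ H2, c s(u, v) = red)
    (heAB2 : ∀ u ∈ A ∪ B, ∀ v ∈ H2, c s(u, v) = blue)
    (heA1 : ∀ u ∈ A, ∀ v ∈ H1, c s(u, v) = red)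
    (heB1 : ∀ u ∈ B, ∀ v ∈ H1, c s(u, v) = blue)
    (m : ℕ) (hm : 3 ≤ m) (P : Fin m → Finset V)
    (hPdisj : ∀ i j, i ≠ j → Disjoint (P i) (P j))
    (hPcard : ∀ i, (P i).card ≤ (t + 1) / 2 - 1)
    (hPunion : Finset.univ.biUnion P = A ∪ B)
    (hPedge : ∀ i j, i ≠ j → ∀ u ∈ P i, ∀ v ∈ P j,
      c s(u, v) = red ∨ c s(u, v) = blue)
    (hmono : ¬ HasMonoCopy c (pathPlus t)) :
    A.card + B.card ≤ t - 1 :=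
  claim_pathSumSmall_general t ht c red blue H2 A B hA2 hB2 hAB hc2 heAB2 m P hPcard hPunion hPedge
    hmono
end
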